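/- arXiv:1909.07047 — 5 statements merged into one kernel-verified Lean document; each statement's English description precedes it below -/
import Mathlib

section
/- For all quaternions a, b, c, d: ‖a*c - (star d)*b‖² + ‖d*a + b*(star c)‖² = (‖a‖² + ‖b‖²) · (‖c‖² + ‖d‖²). In other words, the Cayley–Dickson norm on 𝕆 = ℍ × ℍ is multiplicative: N(x ∘ y) = N(x) · N(y) for all x, y ∈ 𝕆. -/
/-!
In `ℍ` the norm is multiplicative, so expanding both squares gives
`‖a‖²‖c‖² + ‖b‖²‖d‖²` and `‖a‖²‖d‖² + ‖b‖²‖c‖²` together with the cross terms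
`-2⟪a c, d̄ b⟫` and `+2⟪d a, b c̄⟫`. Since `⟪x, y⟫ = Re (x ȳ)` and the real part of a product
is invariant under cyclic permutation, both cross terms equal `±2 Re (d a c b̄)` and cancel.
-/

open Quaternion

theorem Quaternion.re_mul_comm {R : Type*} [CommRing R] (x y : ℍ[R]) :
    (x * y).re = (y * x).re := by
  simp only [re_mul]
  ring

theorem Quaternion.inner_mul_star_mul_eq_inner_mul_mul_star (a b c d : ℍ[ℝ]) :
    inner ℝ (a * c) (star d * b) = inner ℝ (d * a) (b * star c) := by
  simp only [inner_def, star_mul, star_star]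
  calc (a * c * (star b * d)).re = (a * c * star b * d).re := by simp only [mul_assoc]
    _ = (d * (a * c * star b)).re := re_mul_comm _ _
    _ = (d * a * (c * star b)).re := by simp only [mul_assoc]

/-- The Cayley–Dickson norm on `𝕆 = ℍ × ℍ` is multiplicative:
for all quaternions `a b c d`,
`‖a*c - (star d)*b‖² + ‖d*a + b*(star c)‖² = (‖a‖² + ‖b‖²) * (‖c‖² + ‖d‖²)`,
i.e. `N(x ∘ y) = N(x) * N(y)` for the Cayley–Dickson product. -/
theorem cayleyDickson_norm_mul (a b c d : ℍ[ℝ]) :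
    ‖a * c - star d * b‖ ^ 2 + ‖d * a + b * star c‖ ^ 2 =
      (‖a‖ ^ 2 + ‖b‖ ^ 2) * (‖c‖ ^ 2 + ‖d‖ ^ 2) := by
  rw [norm_sub_sq_real, norm_add_sq_real, inner_mul_star_mul_eq_inner_mul_mul_star]
  simp only [norm_mul, norm_star]
  ring
end

section
/- The octonions have no zero divisors: for all quaternions a, b, c, d, if a*c - (star d)*b = 0 and d*a + b*(star c) = 0, then (a = 0 and b = 0) or (c = 0 and d = 0). Equivalently, if x ∘ y = 0 in 𝕆 = ℍ × ℍ then x = 0 or y = 0. -/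
open Quaternion

/-!
The squared norm of the Cayley–Dickson double of `ℍ` is multiplicative: a polynomial identity in
the sixteen coordinates (Degen's eight-square identity). Hence if a product vanishes, one of
the two factors has squared norm `0`, and a sum of two quaternion squared norms vanishes only
when both quaternions do.
-/

namespace Quaternion

variable {R : Type*}

theorem normSq_cayleyDickson_mul [CommRing R] (a b c d : ℍ[R]) :
    normSq (a * c - star d * b) + normSq (d * a + b * star c) =
      (normSq a + normSq b) * (normSq c + normSq d) := by
  simp only [normSq_def', re_mul, imI_mul, imJ_mul, imK_mul, re_sub, imI_sub, imJ_sub, imK_sub,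
    re_add, imI_add, imJ_add, imK_add, re_star, imI_star, imJ_star, imK_star]
  ring

theorem normSq_add_normSq_eq_zero [CommRing R] [LinearOrder R] [IsStrictOrderedRing R]
    {a b : ℍ[R]} : normSq a + normSq b = 0 ↔ a = 0 ∧ b = 0 := by
  rw [add_eq_zero_iff_of_nonneg normSq_nonneg normSq_nonneg, normSq_eq_zero, normSq_eq_zero]

end Quaternion

/-- The octonions (modeled via the Cayley–Dickson construction on `ℍ × ℍ`) have no
zero divisors: if `a*c - (star d)*b = 0` and `d*a + b*(star c) = 0`, then
`(a = 0 ∧ b = 0) ∨ (c = 0 ∧ d = 0)`, i.e. `x ∘ y = 0 → x = 0 ∨ y = 0`. -/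
theorem octonion_no_zero_divisors (a b c d : ℍ[ℝ])
    (h1 : a * c - star d * b = 0) (h2 : d * a + b * star c = 0) :
    (a = 0 ∧ b = 0) ∨ (c = 0 ∧ d = 0) := by
  have hprod : (normSq a + normSq b) * (normSq c + normSq d) = 0 := by
    rw [← normSq_cayleyDickson_mul, h1, h2, map_zero, add_zero]
  simpa only [normSq_add_normSq_eq_zero] using mul_eq_zero.mp hprod
end

section
/- The octonions satisfy the left alternative law: for all x, y in 𝕆 = ℍ × ℍ, (x ∘ x) ∘ y = x ∘ (x ∘ y), where ∘ is the Cayley–Dickson product. -/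
open Quaternion

/-- The Cayley–Dickson product on `𝕆 = ℍ × ℍ`:
`(a,b) ∘ (c,d) = (a*c - (star d)*b, d*a + b*(star c))`. -/
noncomputable def omul (x y : ℍ[ℝ] × ℍ[ℝ]) : ℍ[ℝ] × ℍ[ℝ] :=
  (x.1 * y.1 - star y.2 * x.2, y.2 * x.1 + x.2 * star y.1)

/-!
The Cayley–Dickson double of an associative star ring is left alternative as soon as the trace
`a + star a` and the norm `star a * a` of every element are central: expanding both sides, the
components differ only by commutators with traces and norms.
-/

namespace CayleyDickson

variable {R : Type*} [Ring R] [StarRing R]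

def mul (x y : R × R) : R × R :=
  (x.1 * y.1 - star y.2 * x.2, y.2 * x.1 + x.2 * star y.1)

theorem mul_left_alternative (htrace : ∀ a c : R, Commute (a + star a) c)
    (hnorm : ∀ a c : R, Commute (star a * a) c) (x y : R × R) :
    mul (mul x x) y = mul x (mul x y) := by
  obtain ⟨a, b⟩ := x
  obtain ⟨c, d⟩ := y
  simp only [mul, Prod.mk.injEq, star_add, star_sub, star_mul, star_star]
  constructor
  · linear_combination (norm := noncomm_ring) -(hnorm b c).eq + (htrace a (star d * b)).eq
  · linear_combination (norm := noncomm_ring)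
      (hnorm b d).eq - congrArg (· * d) (htrace b b).eq + congrArg (b * ·) (htrace a (star c)).eq

end CayleyDickson

theorem Quaternion.commute_self_add_star (a c : ℍ[ℝ]) : Commute (a + star a) c := by
  rw [self_add_star']
  exact coe_commutes _ c

theorem Quaternion.commute_star_mul_self (a c : ℍ[ℝ]) : Commute (star a * a) c := by
  rw [star_mul_self]
  exact coe_commutes _ c

/-- The octonions satisfy the left alternative law:
`(x ∘ x) ∘ y = x ∘ (x ∘ y)`. -/
theorem octonion_left_alternative (x y : ℍ[ℝ] × ℍ[ℝ]) :
    omul (omul x x) y = omul x (omul x y) :=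
  CayleyDickson.mul_left_alternative Quaternion.commute_self_add_star Quaternion.commute_star_mul_self x y
end

section
/- Suppose the triples (x, y, z) and (x', y', z') of elements of 𝕆 = ℍ × ℍ satisfy the six relations x ∘ x^* = x' ∘ x'^*, x ∘ y^* = x' ∘ y'^*, x ∘ z^* = x' ∘ z'^*, y ∘ y^* = y' ∘ y'^*, y ∘ z^* = y' ∘ z'^*, z ∘ z^* = z' ∘ z'^*. Then for all real numbers a, b, c: a•x + b•y + c•z = 0 if and only if a•x' + b•y' + c•z' = 0 (where • denotes the real scalar multiplication on ℍ × ℍ and + the componentwise addition). -/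
open Quaternion

/-- The Cayley–Dickson conjugation on `𝕆 = ℍ × ℍ`: `(a,b)^* = (star a, -b)`. -/
def oconj (x : ℍ[ℝ] × ℍ[ℝ]) : ℍ[ℝ] × ℍ[ℝ] := (star x.1, -x.2)

/-! The real part of the first component of `u ∘ v^*` is the Euclidean inner product of `u` and `v`
in `ℍ × ℍ ≅ ℝ⁸`, so the six relations say that the two triples have the same Gram matrix. Since
`‖a • x + b • y + c • z‖²` is the quadratic form of that Gram matrix evaluated at `(a, b, c)`,
it vanishes for one triple exactly when it vanishes for the other. -/

open scoped InnerProductSpace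

theorem Matrix.sum_smul_eq_zero_iff_of_gram_eq {𝕜 ι E F : Type*} [RCLike 𝕜] [Fintype ι]
    [NormedAddCommGroup E] [InnerProductSpace 𝕜 E] [NormedAddCommGroup F] [InnerProductSpace 𝕜 F]
    {v : ι → E} {w : ι → F} (h : gram 𝕜 v = gram 𝕜 w) (c : ι → 𝕜) :
    ∑ i, c i • v i = 0 ↔ ∑ i, c i • w i = 0 := by
  rw [← inner_self_eq_zero (𝕜 := 𝕜) (x := ∑ i, c i • v i), ← star_dotProduct_gram_mulVec, h,
    star_dotProduct_gram_mulVec, inner_self_eq_zero]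

theorem re_fst_omul_oconj (u v : ℍ[ℝ] × ℍ[ℝ]) :
    (omul u (oconj v)).1.re = ⟪WithLp.toLp 2 u, WithLp.toLp 2 v⟫_ℝ := by
  simp [omul, oconj, Quaternion.inner_def, Quaternion.re_mul]
  ring

theorem inner_toLp_eq_of_omul_oconj_eq {u v u' v' : ℍ[ℝ] × ℍ[ℝ]}
    (h : omul u (oconj v) = omul u' (oconj v')) :
    ⟪WithLp.toLp 2 u, WithLp.toLp 2 v⟫_ℝ = ⟪WithLp.toLp 2 u', WithLp.toLp 2 v'⟫_ℝ := by
  rw [← re_fst_omul_oconj, h, re_fst_omul_oconj]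

/-- If triples `(x, y, z)` and `(x', y', z')` of octonions satisfy the six relations
defining the equivalence in the construction of `𝕆P²`, then for all real `a b c`,
`a•x + b•y + c•z = 0 ↔ a•x' + b•y' + c•z' = 0`. -/
theorem octonion_lin_comb_zero_iff (x y z x' y' z' : ℍ[ℝ] × ℍ[ℝ])
    (hxx : omul x (oconj x) = omul x' (oconj x'))
    (hxy : omul x (oconj y) = omul x' (oconj y'))
    (hxz : omul x (oconj z) = omul x' (oconj z'))
    (hyy : omul y (oconj y) = omul y' (oconj y'))
    (hyz : omul y (oconj z) = omul y' (oconj z'))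
    (hzz : omul z (oconj z) = omul z' (oconj z'))
    (a b c : ℝ) :
    a • x + b • y + c • z = 0 ↔ a • x' + b • y' + c • z' = 0 := by
  have gxx := inner_toLp_eq_of_omul_oconj_eq hxx
  have gxy := inner_toLp_eq_of_omul_oconj_eq hxy
  have gxz := inner_toLp_eq_of_omul_oconj_eq hxz
  have gyy := inner_toLp_eq_of_omul_oconj_eq hyy
  have gyz := inner_toLp_eq_of_omul_oconj_eq hyz
  have gzz := inner_toLp_eq_of_omul_oconj_eq hzz
  have hgram : Matrix.gram ℝ (WithLp.toLp 2 ∘ ![x, y, z]) =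
      Matrix.gram ℝ (WithLp.toLp 2 ∘ ![x', y', z']) := by
    ext i j
    fin_cases i <;> fin_cases j <;>
      simp only [Matrix.gram_apply, Function.comp_apply, Fin.zero_eta, Fin.mk_one,
        Fin.reduceFinMk, Matrix.cons_val] <;>
      grind [real_inner_comm]
  simpa [Fin.sum_univ_three, ← WithLp.toLp_smul, ← WithLp.toLp_add] using
    Matrix.sum_smul_eq_zero_iff_of_gram_eq hgram ![a, b, c]
end

section
/- Let S = {(x, y) ∈ 𝕆 × 𝕆 : N(x) + N(y) = 1} (the unit sphere in 𝕆², with the subspace topology from (ℍ × ℍ) × (ℍ × ℍ)), and let r be the relation on S given by (x, y) r (x̃, ỹ) if and only if x ∘ x^* = x̃ ∘ x̃^*, x ∘ y^* = x̃ ∘ ỹ^*, and y ∘ y^* = ỹ ∘ ỹ^*. Then the quotient space S / r (with the quotient topology) is homeomorphic to the 8-sphere, i.e., to the unit sphere {v ∈ EuclideanSpace ℝ (Fin 9) : ‖v‖ = 1}. -/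
open Quaternion

/-- The Cayley–Dickson squared norm on `𝕆 = ℍ × ℍ`: `N(a,b) = ‖a‖² + ‖b‖²`. -/
noncomputable def N (x : ℍ[ℝ] × ℍ[ℝ]) : ℝ := ‖x.1‖ ^ 2 + ‖x.2‖ ^ 2

/-- The unit sphere `S = {(x, y) ∈ 𝕆 × 𝕆 : N(x) + N(y) = 1}`, with the subspace
topology from `(ℍ × ℍ) × (ℍ × ℍ)`. -/
def OSphere : Type :=
  { p : (ℍ[ℝ] × ℍ[ℝ]) × (ℍ[ℝ] × ℍ[ℝ]) // N p.1 + N p.2 = 1 }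

noncomputable instance : TopologicalSpace OSphere :=
  instTopologicalSpaceSubtype

/-- The relation defining the octonionic projective line: `(x, y) r (x̃, ỹ)` iff
`x ∘ x^* = x̃ ∘ x̃^*`, `x ∘ y^* = x̃ ∘ ỹ^*` and `y ∘ y^* = ỹ ∘ ỹ^*`. -/
def oRel (p q : OSphere) : Prop :=
  omul p.1.1 (oconj p.1.1) = omul q.1.1 (oconj q.1.1) ∧
    omul p.1.1 (oconj p.1.2) = omul q.1.1 (oconj q.1.2) ∧
    omul p.1.2 (oconj p.1.2) = omul q.1.2 (oconj q.1.2)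

/-!
The Hopf map `(x, y) ↦ (2 x ∘ y^*, N x - N y)` sends `S` onto the unit sphere of `𝕆 × ℝ ≅ ℝ⁹`:
multiplicativity of `N` gives `‖(2 x ∘ y^*, N x - N y)‖ = N x + N y`. Since `x ∘ x^* = N x`,
its fibres are exactly the classes of `r`, and a continuous surjection from the compact space `S`
onto a Hausdorff space is a quotient map.
-/

open Metric Module Topology

theorem Topology.IsQuotientMap.nonempty_quot_homeomorph {X Y : Type*} [TopologicalSpace X]
    [TopologicalSpace Y] {r : X → X → Prop} {f : X → Y} (hf : IsQuotientMap f)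
    (hr : ∀ a b, r a b ↔ f a = f b) : Nonempty (Quot r ≃ₜ Y) := by
  obtain rfl : r = fun a b => f a = f b := funext₂ fun a b => propext (hr a b)
  exact ⟨IsQuotientMap.homeomorph (f := ⟨f, hf.continuous⟩) hf⟩

def LinearIsometryEquiv.sphereHomeomorph {𝕜 E F : Type*} [NormedField 𝕜]
    [SeminormedAddCommGroup E] [SeminormedAddCommGroup F] [NormedSpace 𝕜 E] [NormedSpace 𝕜 F]
    (e : E ≃ₗᵢ[𝕜] F) (r : ℝ) : sphere (0 : E) r ≃ₜ sphere (0 : F) r :=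
  e.toHomeomorph.subtype fun x => by simp

lemma N_eq_norm_toLp_sq (x : ℍ[ℝ] × ℍ[ℝ]) : N x = ‖WithLp.toLp 2 x‖ ^ 2 :=
  (WithLp.prod_norm_sq_eq_of_L2 _).symm

lemma N_nonneg (x : ℍ[ℝ] × ℍ[ℝ]) : 0 ≤ N x := by
  unfold N; positivity

lemma N_smul (r : ℝ) (x : ℍ[ℝ] × ℍ[ℝ]) : N (r • x) = r ^ 2 * N x := by
  simp only [N, Prod.smul_fst, Prod.smul_snd, norm_smul, mul_pow, Real.norm_eq_abs, sq_abs]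
  ring

lemma N_eq_zero_iff {x : ℍ[ℝ] × ℍ[ℝ]} : N x = 0 ↔ x = 0 := by
  simp [N_eq_norm_toLp_sq]

lemma omul_oconj_self (x : ℍ[ℝ] × ℍ[ℝ]) : omul x (oconj x) = ((N x : ℍ[ℝ]), 0) := by
  ext : 1
  · simp only [omul, oconj, star_neg, neg_mul, sub_neg_eq_add, self_mul_star, star_mul_self, N]
    push_cast [← normSq_eq_norm_mul_self, sq]
    rfl
  · simp [omul, oconj]

lemma omul_oconj_coe (x : ℍ[ℝ] × ℍ[ℝ]) (r : ℝ) : omul x (oconj ((r : ℍ[ℝ]), 0)) = r • x := by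
  ext : 1 <;> simp [omul, oconj, mul_coe_eq_smul]

lemma N_oconj (x : ℍ[ℝ] × ℍ[ℝ]) : N (oconj x) = N x := by
  simp [N, oconj]

lemma N_omul (x y : ℍ[ℝ] × ℍ[ℝ]) : N (omul x y) = N x * N y := by
  simp only [N, omul, sq, ← normSq_eq_norm_mul_self, normSq_def', re_mul, imI_mul, imJ_mul,
    imK_mul, re_sub, imI_sub, imJ_sub, imK_sub, re_add, imI_add, imJ_add, imK_add, re_star,
    imI_star, imJ_star, imK_star]
  ring

instance : CompactSpace OSphere := by
  let φ : WithLp 2 (WithLp 2 (ℍ[ℝ] × ℍ[ℝ]) × WithLp 2 (ℍ[ℝ] × ℍ[ℝ])) →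
      (ℍ[ℝ] × ℍ[ℝ]) × (ℍ[ℝ] × ℍ[ℝ]) := fun v => (v.fst.ofLp, v.snd.ofLp)
  have hφ : φ '' sphere 0 1 = {p | N p.1 + N p.2 = 1} := by
    ext p
    constructor
    · rintro ⟨v, hv, rfl⟩
      simp [φ, N_eq_norm_toLp_sq, ← WithLp.prod_norm_sq_eq_of_L2, mem_sphere_zero_iff_norm.mp hv]
    · intro hp
      refine ⟨WithLp.toLp 2 (WithLp.toLp 2 p.1, WithLp.toLp 2 p.2), ?_, rfl⟩
      rw [mem_sphere_zero_iff_norm, ← pow_eq_one_iff_of_nonneg (norm_nonneg _) two_ne_zero,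
        WithLp.prod_norm_sq_eq_of_L2]
      simpa [N_eq_norm_toLp_sq] using hp
  have hcont : Continuous φ := by fun_prop
  have hcpt := (isCompact_sphere 0 1).image hcont
  rw [hφ] at hcpt
  exact isCompact_iff_compactSpace.mp hcpt

abbrev HopfTarget : Type := WithLp 2 (WithLp 2 (ℍ[ℝ] × ℍ[ℝ]) × ℝ)

noncomputable def hopfMap (x y : ℍ[ℝ] × ℍ[ℝ]) : HopfTarget :=
  WithLp.toLp 2 (WithLp.toLp 2 ((2 : ℝ) • omul x (oconj y)), N x - N y)

lemma norm_hopfMap (x y : ℍ[ℝ] × ℍ[ℝ]) : ‖hopfMap x y‖ = N x + N y := by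
  have hsq : ‖hopfMap x y‖ ^ 2 = (N x + N y) ^ 2 := by
    rw [hopfMap, WithLp.prod_norm_sq_eq_of_L2]
    simp only [WithLp.toLp_fst, WithLp.toLp_snd, ← N_eq_norm_toLp_sq, N_smul, N_omul, N_oconj,
      Real.norm_eq_abs, sq_abs]
    ring
  exact (pow_left_inj₀ (norm_nonneg _) (add_nonneg (N_nonneg x) (N_nonneg y)) two_ne_zero).mp hsq

lemma continuous_hopfMap :
    Continuous fun p : (ℍ[ℝ] × ℍ[ℝ]) × (ℍ[ℝ] × ℍ[ℝ]) => hopfMap p.1 p.2 := by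
  unfold hopfMap omul oconj N
  fun_prop

lemma hopfMap_eq_hopfMap_iff {x y x' y' : ℍ[ℝ] × ℍ[ℝ]} (h : N x + N y = N x' + N y') :
    hopfMap x y = hopfMap x' y' ↔
      N x = N x' ∧ omul x (oconj y) = omul x' (oconj y') ∧ N y = N y' := by
  simp only [hopfMap, (WithLp.toLp_injective 2).eq_iff, Prod.mk.injEq,
    smul_right_injective _ (two_ne_zero' ℝ) |>.eq_iff]
  constructor
  · rintro ⟨hm, hd⟩
    exact ⟨by linarith, hm, by linarith⟩
  · rintro ⟨hx, hm, hy⟩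
    exact ⟨hm, by rw [hx, hy]⟩

lemma oRel_iff_hopfMap_eq (p q : OSphere) :
    oRel p q ↔ hopfMap p.1.1 p.1.2 = hopfMap q.1.1 q.1.2 := by
  rw [hopfMap_eq_hopfMap_iff (p.2.trans q.2.symm), oRel]
  simp only [omul_oconj_self, Prod.mk.injEq, coe_inj, and_true]

lemma exists_hopfMap_eq {v : HopfTarget} (hv : ‖v‖ = 1) :
    ∃ x y : ℍ[ℝ] × ℍ[ℝ], N x + N y = 1 ∧ hopfMap x y = v := by
  obtain ⟨⟨⟨u⟩, t⟩⟩ := v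
  have hut : N u + t ^ 2 = 1 := by
    have hsq := congrArg (· ^ 2) hv
    simp only [WithLp.prod_norm_sq_eq_of_L2, one_pow] at hsq
    simpa [N] using hsq
  by_cases ht : t = 1
  · obtain rfl : u = 0 := N_eq_zero_iff.mp (by subst ht; linarith)
    refine ⟨(1, 0), 0, by simp [N], ?_⟩
    simp [hopfMap, omul, oconj, N, ht]
  · have ht1 : t < 1 := lt_of_le_of_ne (by nlinarith [N_nonneg u]) ht
    set s := √((1 - t) / 2)
    have hs : 0 < s := Real.sqrt_pos.mpr (by linarith)
    have hs2 : s ^ 2 = (1 - t) / 2 := Real.sq_sqrt (by linarith)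
    have hNx : N ((2 * s)⁻¹ • u) = (1 + t) / 2 := by
      rw [N_smul, inv_pow, mul_pow, hs2]
      field_simp
      nlinarith
    have hNy : N ((s : ℍ[ℝ]), 0) = (1 - t) / 2 := by
      simp [N, hs2]
    refine ⟨(2 * s)⁻¹ • u, ((s : ℍ[ℝ]), 0), by rw [hNx, hNy]; ring, ?_⟩
    rw [hopfMap, omul_oconj_coe, hNx, hNy, smul_smul, smul_smul,
      mul_inv_cancel₀ (by positivity), one_smul]
    congr 2
    ring

lemma finrank_hopfTarget : finrank ℝ HopfTarget = 9 := by
  simp only [(WithLp.linearEquiv 2 ℝ _).finrank_eq, finrank_prod, finrank_eq_four, finrank_self]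

/-- The octonionic projective line `𝕆P¹ = S / r`, with the quotient topology, is
homeomorphic to the unit sphere `S⁸ ⊆ ℝ⁹`. -/
theorem octonionP1_homeomorph_sphere :
    Nonempty (Quot oRel ≃ₜ Metric.sphere (0 : EuclideanSpace ℝ (Fin 9)) 1) := by
  let hopf : OSphere → sphere (0 : HopfTarget) 1 := fun p =>
    ⟨hopfMap p.1.1 p.1.2, by simp [norm_hopfMap, p.2]⟩
  have hopf_continuous : Continuous hopf :=
    (continuous_hopfMap.comp continuous_subtype_val).subtype_mk _
  have hopf_surjective : Function.Surjective hopf := by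
    rintro ⟨v, hv⟩
    obtain ⟨x, y, hxy, rfl⟩ := exists_hopfMap_eq (mem_sphere_zero_iff_norm.mp hv)
    exact ⟨⟨(x, y), hxy⟩, rfl⟩
  have hopf_fibres (p q : OSphere) : oRel p q ↔ hopf p = hopf q :=
    (oRel_iff_hopfMap_eq p q).trans (Subtype.ext_iff (a1 := hopf p) (a2 := hopf q)).symm
  obtain ⟨e⟩ := (IsQuotientMap.of_surjective_continuous hopf_surjective
    hopf_continuous).nonempty_quot_homeomorph hopf_fibres
  let toEuclidean : HopfTarget ≃ₗᵢ[ℝ] EuclideanSpace ℝ (Fin 9) :=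
    ((stdOrthonormalBasis ℝ HopfTarget).reindex (finCongr finrank_hopfTarget)).repr
  exact ⟨e.trans (toEuclidean.sphereHomeomorph 1)⟩
end
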